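/- Let N, N' ⊆ ℤ² be finite complete neighborhoods containing 0 with the same convex hull in ℝ². Then there exists a constant C such that |RT_N(n,m) − RT_{N'}(n,m)| ≤ C for all n, m ∈ ℕ. -/

import Mathlib

open Pointwise

/-- `mpow N k` is the `k`-fold Minkowski sum of `N` with itself (`mpow N 0 = {0}`). -/
def mpow (N : Set (ℤ × ℤ)) : ℕ → Set (ℤ × ℤ)
  | 0 => {0}
  | k + 1 => N + mpow N k

/-- The set of integer points in the rectangle `[0, n-1] × [0, m-1]`. -/
def rect (n m : ℕ) : Set (ℤ × ℤ) :=
  {p | 0 ≤ p.1 ∧ p.1 ≤ (n : ℤ) - 1 ∧ 0 ≤ p.2 ∧ p.2 ≤ (m : ℤ) - 1}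

/-- Real time function: the least `t` such that `[0,n-1]×[0,m-1] ⊆ N^t`. -/
noncomputable def RT (N : Set (ℤ × ℤ)) (n m : ℕ) : ℕ :=
  sInf {t : ℕ | rect n m ⊆ mpow N t}

/-- The canonical embedding of `ℤ²` into `ℝ²`. -/
def emb (v : ℤ × ℤ) : ℝ × ℝ := ((v.1 : ℝ), (v.2 : ℝ))

/-! A point of `k • N'` is a sum of `k` points of `N'`, each in the convex hull of `N`, so its image
in `ℝ²` is a combination `∑ w p • p` of the points of `N` with `w ≥ 0` and `∑ w p = k`. Rounding the
weights down gives a point of `(∑ ⌊w p⌋₊) • N` with at most `k` summands, and the remainder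
`∑ fract (w p) • p` has norm at most `∑ ‖p‖`; by completeness the finitely many lattice points of
that ball all lie in one `c • N`. Hence `k • N' ⊆ (k + c) • N`, symmetrically with the roles
swapped, and the real-time functions differ by at most `max c c'`. -/

open Set

lemma mpow_eq_nsmul (N : Set (ℤ × ℤ)) (k : ℕ) : mpow N k = k • N := by
  induction k with
  | zero => rfl
  | succ k ih => rw [mpow, ih, succ_nsmul']

lemma exists_subset_nsmul_of_finite {α : Type*} [AddMonoid α] {N : Set α} (h0 : (0 : α) ∈ N)
    (hcomplete : ⋃ k : ℕ, k • N = univ) {S : Set α} (hS : S.Finite) : ∃ t : ℕ, S ⊆ t • N := by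
  simpa using (Set.nsmul_right_monotone h0).directed_le.exists_mem_subset_of_finset_subset_biUnion
    (s := hS.toFinset) (by simp [hcomplete])

lemma sum_nsmul_mem_nsmul {α : Type*} [AddCommMonoid α] {N : Set α} {s : Finset α}
    (hs : ↑s ⊆ N) (n : α → ℕ) : ∑ p ∈ s, n p • p ∈ (∑ p ∈ s, n p) • N := by
  rw [Finset.sum_smul]
  exact Set.finsetSum_mem_finsetSum _ _ _ fun p hp => Set.nsmul_mem_nsmul (hs hp)

lemma Finset.exists_weights_of_mem_convexHull_image {α E : Type*} [DecidableEq E] [AddCommGroup E]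
    [Module ℝ E] {s : Finset α} {f : α → E} (hf : Set.InjOn f s) {x : E}
    (hx : x ∈ convexHull ℝ (f '' s)) :
    ∃ w : α → ℝ, (∀ p ∈ s, 0 ≤ w p) ∧ ∑ p ∈ s, w p = 1 ∧ ∑ p ∈ s, w p • f p = x := by
  rw [← Finset.coe_image, Finset.mem_convexHull'] at hx
  obtain ⟨w, hw0, hw1, hwx⟩ := hx
  refine ⟨w ∘ f, fun p hp => hw0 _ (Finset.mem_image_of_mem f hp), ?_, ?_⟩
  · rwa [Finset.sum_image hf] at hw1
  · rwa [Finset.sum_image hf] at hwx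

lemma exists_weights_of_mem_nsmul {α E : Type*} [AddCommMonoid α] [AddCommGroup E] [Module ℝ E]
    {s : Finset α} {N' : Set α} (f : α →+ E) (hf : Set.InjOn f s)
    (hN' : f '' N' ⊆ convexHull ℝ (f '' s)) {k : ℕ} {x : α} (hx : x ∈ k • N') :
    ∃ w : α → ℝ, (∀ p ∈ s, 0 ≤ w p) ∧ ∑ p ∈ s, w p = k ∧ ∑ p ∈ s, w p • f p = f x := by
  classical
  induction k generalizing x with
  | zero =>
    rw [zero_nsmul, Set.mem_zero] at hx
    exact ⟨0, fun _ _ => le_rfl, by simp, by simp [hx]⟩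
  | succ k ih =>
    rw [succ_nsmul'] at hx
    obtain ⟨a, ha, y, hy, rfl⟩ := hx
    obtain ⟨u, hu0, hu1, hua⟩ :=
      Finset.exists_weights_of_mem_convexHull_image hf (hN' (Set.mem_image_of_mem f ha))
    obtain ⟨v, hv0, hvk, hvy⟩ := ih hy
    refine ⟨u + v, fun p hp => add_nonneg (hu0 p hp) (hv0 p hp), ?_, ?_⟩
    · simp [Finset.sum_add_distrib, hu1, hvk, add_comm]
    · simp [add_smul, Finset.sum_add_distrib, hua, hvy]

def embHom : ℤ × ℤ →+ ℝ × ℝ := (Int.castAddHom ℝ).prodMap (Int.castAddHom ℝ)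

lemma coe_embHom : ⇑embHom = emb := rfl

lemma norm_emb (v : ℤ × ℤ) : ‖emb v‖ = ‖v‖ := by
  simp [emb, Prod.norm_def, Int.norm_eq_abs]

lemma emb_injective : Function.Injective emb := fun a b h => by
  simpa [emb, Prod.ext_iff] using h

lemma norm_sub_sum_floor_nsmul_le {s : Finset (ℤ × ℤ)} {w : ℤ × ℤ → ℝ} (hw : ∀ p ∈ s, 0 ≤ w p)
    {x : ℤ × ℤ} (hx : ∑ p ∈ s, w p • emb p = emb x) :
    ‖x - ∑ p ∈ s, ⌊w p⌋₊ • p‖ ≤ ∑ p ∈ s, ‖p‖ := by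
  have hfract : ∀ p ∈ s, |w p - ⌊w p⌋₊| ≤ 1 := fun p hp => by
    rw [abs_le]
    constructor <;> linarith [Nat.floor_le (hw p hp), Nat.lt_floor_add_one (w p)]
  have hemb : emb (x - ∑ p ∈ s, ⌊w p⌋₊ • p) = ∑ p ∈ s, (w p - ⌊w p⌋₊) • emb p := by
    rw [← coe_embHom, map_sub, map_sum]
    simp_rw [map_nsmul, coe_embHom, ← Nat.cast_smul_eq_nsmul ℝ, sub_smul, Finset.sum_sub_distrib,
      hx]
  calc ‖x - ∑ p ∈ s, ⌊w p⌋₊ • p‖ = ‖∑ p ∈ s, (w p - ⌊w p⌋₊) • emb p‖ := by rw [← hemb, norm_emb]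
    _ ≤ ∑ p ∈ s, ‖(w p - ⌊w p⌋₊) • emb p‖ := norm_sum_le _ _
    _ ≤ ∑ p ∈ s, ‖p‖ := Finset.sum_le_sum fun p hp => by
      rw [norm_smul, norm_emb, Real.norm_eq_abs]
      exact mul_le_of_le_one_left (norm_nonneg p) (hfract p hp)

lemma exists_nsmul_subset_add_nsmul {N N' : Set (ℤ × ℤ)} (hN : N.Finite) (h0 : (0 : ℤ × ℤ) ∈ N)
    (hcomplete : ⋃ k : ℕ, k • N = univ) (hhull : emb '' N' ⊆ convexHull ℝ (emb '' N)) :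
    ∃ c : ℕ, ∀ k : ℕ, k • N' ⊆ (k + c) • N := by
  set s := hN.toFinset
  obtain ⟨c, hc⟩ := exists_subset_nsmul_of_finite h0 hcomplete
    (isCompact_closedBall (0 : ℤ × ℤ) (∑ p ∈ s, ‖p‖)).finite_of_discrete
  refine ⟨c, fun k x hx => ?_⟩
  obtain ⟨w, hw0, hwk, hwx⟩ := exists_weights_of_mem_nsmul (s := s) embHom emb_injective.injOn
    (by rwa [hN.coe_toFinset]) hx
  set n : ℤ × ℤ → ℕ := fun p => ⌊w p⌋₊
  have hn : ∑ p ∈ s, n p ≤ k := by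
    have : ∑ p ∈ s, (n p : ℝ) ≤ k := hwk ▸ Finset.sum_le_sum fun p hp => Nat.floor_le (hw0 p hp)
    exact_mod_cast this
  have hy : ∑ p ∈ s, n p • p ∈ (∑ p ∈ s, n p) • N :=
    sum_nsmul_mem_nsmul (by rw [hN.coe_toFinset]) n
  have hr : x - ∑ p ∈ s, n p • p ∈ c • N :=
    hc (mem_closedBall_zero_iff.2 (norm_sub_sum_floor_nsmul_le hw0 hwx))
  have hx' : x ∈ (∑ p ∈ s, n p + c) • N := by
    rw [add_nsmul, ← add_sub_cancel (∑ p ∈ s, n p • p) x]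
    exact Set.add_mem_add hy hr
  exact Set.nsmul_subset_nsmul_right h0 (by omega) hx'

lemma rect_finite (n m : ℕ) : (rect n m).Finite :=
  ((Set.finite_Icc 0 ((n : ℤ) - 1)).prod (Set.finite_Icc 0 ((m : ℤ) - 1))).subset
    fun _ hp => ⟨⟨hp.1, hp.2.1⟩, hp.2.2.1, hp.2.2.2⟩

lemma RT_eq_sInf_nsmul (N : Set (ℤ × ℤ)) (n m : ℕ) :
    RT N n m = sInf {t : ℕ | rect n m ⊆ t • N} := by
  simp only [RT, mpow_eq_nsmul]

lemma RT_le_RT_add {N N' : Set (ℤ × ℤ)} (h0' : (0 : ℤ × ℤ) ∈ N')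
    (hcomplete' : ⋃ k : ℕ, k • N' = univ) {c : ℕ} (hc : ∀ k : ℕ, k • N' ⊆ (k + c) • N)
    (n m : ℕ) : RT N n m ≤ RT N' n m + c := by
  rw [RT_eq_sInf_nsmul, RT_eq_sInf_nsmul]
  have hne : {t : ℕ | rect n m ⊆ t • N'}.Nonempty :=
    exists_subset_nsmul_of_finite h0' hcomplete' (rect_finite n m)
  exact Nat.sInf_le ((Nat.sInf_mem hne).trans (hc _))

theorem stmt_13 (N N' : Set (ℤ × ℤ)) (hN : N.Finite) (hN' : N'.Finite)
    (h0 : (0 : ℤ × ℤ) ∈ N) (h0' : (0 : ℤ × ℤ) ∈ N')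
    (hcomplete : (⋃ k : ℕ, mpow N k) = Set.univ)
    (hcomplete' : (⋃ k : ℕ, mpow N' k) = Set.univ)
    (hhull : convexHull ℝ (emb '' N) = convexHull ℝ (emb '' N')) :
    ∃ C : ℕ, ∀ n m : ℕ, |(RT N n m : ℤ) - (RT N' n m : ℤ)| ≤ C := by
  simp only [mpow_eq_nsmul] at hcomplete hcomplete'
  obtain ⟨c, hc⟩ := exists_nsmul_subset_add_nsmul hN h0 hcomplete
    ((subset_convexHull ℝ _).trans hhull.ge)
  obtain ⟨c', hc'⟩ := exists_nsmul_subset_add_nsmul hN' h0' hcomplete'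
    ((subset_convexHull ℝ _).trans hhull.le)
  refine ⟨max c c', fun n m => abs_sub_le_iff.2 ⟨?_, ?_⟩⟩
  · have := RT_le_RT_add h0' hcomplete' hc n m
    omega
  · have := RT_le_RT_add h0 hcomplete hc' n m
    omega
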